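/- Let 1 ≤ p < q < ∞ and 0 < r < s. There exists a finite constant c(p,q,r,s), depending only on p, q, r, s, such that for all probability measures φ and ψ on ℝ with characteristic functions φ̂ and ψ̂, D_{r,p}(φ,ψ) ≤ c(p,q,r,s)·D_{s,q}(φ,ψ)^{r/s}. -/

import Mathlib

open MeasureTheory Set
open scoped ENNReal

/-- The characteristic function (Fourier transform) of a measure on `ℝ`,
`φ̂(ξ) = ∫ e^{-iξv} dφ(v)`. -/
noncomputable def charFn (μ : Measure ℝ) (ξ : ℝ) : ℂ :=
  ∫ v, Complex.exp (-(ξ * v) * Complex.I) ∂μ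

/-- The Fourier-based metric
`D_{s,p}(φ,ψ) = (∫_ℝ |ξ|^{-(ps+1)} |φ̂(ξ) - ψ̂(ξ)|^p dξ)^{1/p}`,
with values in `ℝ≥0∞`. -/
noncomputable def DFourierP (s p : ℝ) (φ ψ : Measure ℝ) : ℝ≥0∞ :=
  (∫⁻ ξ : ℝ, ENNReal.ofReal (|ξ| ^ (-(p * s + 1))) *
      (ENNReal.ofReal ‖charFn φ ξ - charFn ψ ξ‖) ^ p) ^ (1 / p)

/-! Split the frequency line at `|ξ| = R`. Near the origin, Hölder's inequality with exponents
`q/p` and `q/(q-p)` bounds the `D_{r,p}` integrand by `A^{p/q} R^{p(s-r)}`, where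
`A = D_{s,q}^q`, because `|ξ|^{pq(s-r)/(q-p) - 1}` is integrable there; on the tails
`|φ̂ - ψ̂| ≤ 2` and the integrability of `|ξ|^{-(pr+1)}` give `O(R^{-pr})`. The choice
`R = A^{-1/(qs)}` makes both terms `O(A^{pr/(qs)}) = O(D_{s,q}^{pr})`. -/

theorem lintegral_comp_abs (g : ℝ → ℝ≥0∞) : ∫⁻ x, g |x| = 2 * ∫⁻ x in Ioi 0, g x := by
  have hpos : ∫⁻ x in Ioi 0, g |x| = ∫⁻ x in Ioi 0, g x :=
    setLIntegral_congr_fun measurableSet_Ioi fun x hx => by rw [abs_of_pos hx]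
  have hneg : ∫⁻ x in Iic 0, g |x| = ∫⁻ x in Ioi 0, g x := by
    have := (Measure.measurePreserving_neg volume).setLIntegral_comp_preimage_emb
      (MeasurableEquiv.neg ℝ).measurableEmbedding (fun x => g |x|) (Ici 0)
    simp only [abs_neg, neg_preimage, neg_Ici, neg_zero] at this
    rw [this, setLIntegral_congr Ioi_ae_eq_Ici.symm, hpos]
  rw [← lintegral_add_compl _ measurableSet_Ioi, compl_Ioi, hpos, hneg, two_mul]

theorem setLIntegral_preimage_abs (g : ℝ → ℝ≥0∞) {s : Set ℝ} (hs : MeasurableSet s) :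
    ∫⁻ x in abs ⁻¹' s, g |x| = 2 * ∫⁻ x in s ∩ Ioi 0, g x := by
  calc ∫⁻ x in abs ⁻¹' s, g |x| = ∫⁻ x, s.indicator g |x| := by
        rw [← lintegral_indicator (measurable_abs hs)]; rfl
    _ = 2 * ∫⁻ x in s ∩ Ioi 0, g x := by
        rw [lintegral_comp_abs, lintegral_indicator hs, Measure.restrict_restrict hs]

theorem setLIntegral_Ioc_rpow {α R : ℝ} (hα : -1 < α) (hR : 0 ≤ R) :
    ∫⁻ x in Ioc 0 R, ENNReal.ofReal (x ^ α) = ENNReal.ofReal (R ^ (α + 1) / (α + 1)) := by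
  rw [← ofReal_integral_eq_lintegral_ofReal, ← intervalIntegral.integral_of_le hR,
    integral_rpow (Or.inl hα), Real.zero_rpow (by linarith), sub_zero]
  · exact (intervalIntegrable_iff_integrableOn_Ioc_of_le hR).mp
      (intervalIntegral.intervalIntegrable_rpow' hα)
  · filter_upwards [ae_restrict_mem measurableSet_Ioc] with x hx
    exact Real.rpow_nonneg hx.1.le α

theorem setLIntegral_Ioi_rpow {e R : ℝ} (he : e < -1) (hR : 0 < R) :
    ∫⁻ x in Ioi R, ENNReal.ofReal (x ^ e) = ENNReal.ofReal (-R ^ (e + 1) / (e + 1)) := by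
  rw [← ofReal_integral_eq_lintegral_ofReal (integrableOn_Ioi_rpow_of_lt he hR),
    integral_Ioi_rpow_of_lt he hR]
  filter_upwards [ae_restrict_mem measurableSet_Ioi] with x hx
  exact Real.rpow_nonneg (hR.trans hx).le e

theorem setLIntegral_abs_le_abs_rpow {α R : ℝ} (hα : -1 < α) (hR : 0 ≤ R) :
    ∫⁻ ξ in {ξ : ℝ | |ξ| ≤ R}, ENNReal.ofReal (|ξ| ^ α) =
      2 * ENNReal.ofReal (R ^ (α + 1) / (α + 1)) := by
  rw [← setLIntegral_Ioc_rpow hα hR, ← Ioi_inter_Iic, inter_comm]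
  exact setLIntegral_preimage_abs (fun x => ENNReal.ofReal (x ^ α)) measurableSet_Iic

theorem setLIntegral_lt_abs_abs_rpow {e R : ℝ} (he : e < -1) (hR : 0 < R) :
    ∫⁻ ξ in {ξ : ℝ | R < |ξ|}, ENNReal.ofReal (|ξ| ^ e) =
      2 * ENNReal.ofReal (-R ^ (e + 1) / (e + 1)) := by
  rw [← setLIntegral_Ioi_rpow he hR,
    ← inter_eq_left.mpr (Ioi_subset_Ioi hR.le : Ioi R ⊆ Ioi 0)]
  exact setLIntegral_preimage_abs (fun x => ENNReal.ofReal (x ^ e)) measurableSet_Ioi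

theorem ofReal_rpow_add_mul_rpow_mul {x a c q θ : ℝ} (hx : 0 ≤ x) (hθ : 0 ≤ θ)
    (h : a * θ + c ≠ 0) (y : ℝ≥0∞) :
    ENNReal.ofReal (x ^ (a * θ + c)) * y ^ (q * θ) =
      (ENNReal.ofReal (x ^ a) * y ^ q) ^ θ * ENNReal.ofReal (x ^ c) := by
  rw [Real.rpow_add' hx h, ENNReal.ofReal_mul (by positivity), Real.rpow_mul hx,
    ← ENNReal.ofReal_rpow_of_nonneg (by positivity) hθ, ENNReal.mul_rpow_of_nonneg _ _ hθ,
    ENNReal.rpow_mul]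
  ring

section
variable {p q r s R : ℝ} {f : ℝ → ℝ≥0∞}

theorem ofReal_abs_rpow_mul_rpow_eq_mul (hp : 0 < p) (hq : 0 < q) (hr : 0 ≤ r) (ξ : ℝ) :
    ENNReal.ofReal (|ξ| ^ (-(p * r + 1))) * f ξ ^ p =
      (ENNReal.ofReal (|ξ| ^ (-(q * s + 1))) * f ξ ^ q) ^ (p / q) *
        ENNReal.ofReal (|ξ| ^ ((q * s + 1) * (p / q) - (p * r + 1))) := by
  have hexp : -(q * s + 1) * (p / q) + ((q * s + 1) * (p / q) - (p * r + 1)) = -(p * r + 1) := by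
    ring
  have h := ofReal_rpow_add_mul_rpow_mul (q := q) (abs_nonneg ξ) (div_pos hp hq).le
    (hexp ▸ (neg_neg_of_pos (by positivity)).ne) (f ξ)
  rwa [hexp, mul_div_cancel₀ p hq.ne'] at h

theorem ENNReal.rpow_div_rpow_div_cancel {x : ℝ≥0∞} (hp : p ≠ 0) (hq : q ≠ 0) :
    (x ^ (p / q)) ^ (q / p) = x := by
  rw [← ENNReal.rpow_mul, div_mul_div_comm, mul_comm p q, div_self (mul_ne_zero hq hp),
    ENNReal.rpow_one]

theorem setLIntegral_weight_rpow_le_holder (hp : 0 < p) (hpq : p < q) (hr : 0 ≤ r)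
    (hf : Measurable f) (S : Set ℝ) :
    ∫⁻ ξ in S, ENNReal.ofReal (|ξ| ^ (-(p * r + 1))) * f ξ ^ p ≤
      (∫⁻ ξ, ENNReal.ofReal (|ξ| ^ (-(q * s + 1))) * f ξ ^ q) ^ (p / q) *
        (∫⁻ ξ in S, ENNReal.ofReal (|ξ| ^ (p * q * (s - r) / (q - p) - 1))) ^ ((q - p) / q) := by
  have hq : 0 < q := hp.trans hpq
  have hqp : 0 < q - p := sub_pos.mpr hpq
  have hconj : (q / p).HolderConjugate (q / (q - p)) := by
    rw [Real.holderConjugate_iff]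
    refine ⟨(one_lt_div hp).mpr hpq, ?_⟩
    field_simp
    ring
  have hg : ∀ ξ : ℝ,
      ENNReal.ofReal (|ξ| ^ ((q * s + 1) * (p / q) - (p * r + 1))) ^ (q / (q - p)) =
        ENNReal.ofReal (|ξ| ^ (p * q * (s - r) / (q - p) - 1)) := fun ξ => by
    rw [ENNReal.ofReal_rpow_of_nonneg (by positivity) (by positivity),
      ← Real.rpow_mul (abs_nonneg ξ)]
    congr 2
    field_simp
    ring
  calc ∫⁻ ξ in S, ENNReal.ofReal (|ξ| ^ (-(p * r + 1))) * f ξ ^ p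
      = ∫⁻ ξ in S, ((fun ξ => (ENNReal.ofReal (|ξ| ^ (-(q * s + 1))) * f ξ ^ q) ^ (p / q)) *
          fun ξ => ENNReal.ofReal (|ξ| ^ ((q * s + 1) * (p / q) - (p * r + 1)))) ξ :=
        lintegral_congr (ofReal_abs_rpow_mul_rpow_eq_mul hp hq hr)
    _ ≤ (∫⁻ ξ in S, ENNReal.ofReal (|ξ| ^ (-(q * s + 1))) * f ξ ^ q) ^ (p / q) *
          (∫⁻ ξ in S, ENNReal.ofReal (|ξ| ^ (p * q * (s - r) / (q - p) - 1))) ^ ((q - p) / q) := by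
      refine (ENNReal.lintegral_mul_le_Lp_mul_Lq _ hconj (by fun_prop) (by fun_prop)).trans_eq ?_
      simp only [ENNReal.rpow_div_rpow_div_cancel hp.ne' hq.ne', hg, one_div_div]
    _ ≤ _ := by
      gcongr
      exact Measure.restrict_le_self

theorem setLIntegral_abs_le_weight_rpow_le (hp : 0 < p) (hpq : p < q) (hr : 0 ≤ r)
    (hrs : r < s) (hf : Measurable f) (hR : 0 ≤ R) :
    ∫⁻ ξ in {ξ | |ξ| ≤ R}, ENNReal.ofReal (|ξ| ^ (-(p * r + 1))) * f ξ ^ p ≤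
      ENNReal.ofReal (2 * (q - p) / (p * q * (s - r))) ^ ((q - p) / q) *
        (∫⁻ ξ, ENNReal.ofReal (|ξ| ^ (-(q * s + 1))) * f ξ ^ q) ^ (p / q) *
        ENNReal.ofReal (R ^ (p * (s - r))) := by
  have hq : 0 < q := hp.trans hpq
  have hqp : 0 < q - p := sub_pos.mpr hpq
  have hsr : 0 < s - r := sub_pos.mpr hrs
  have hκ : 0 < p * q * (s - r) / (q - p) := by positivity
  have hball := setLIntegral_abs_le_abs_rpow (α := p * q * (s - r) / (q - p) - 1) (by linarith) hR
  rw [sub_add_cancel] at hball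
  have hconst : 2 * ENNReal.ofReal (R ^ (p * q * (s - r) / (q - p)) / (p * q * (s - r) / (q - p))) =
      ENNReal.ofReal (2 * (q - p) / (p * q * (s - r))) *
        ENNReal.ofReal (R ^ (p * q * (s - r) / (q - p))) := by
    rw [← ENNReal.ofReal_mul (by positivity), ← ENNReal.ofReal_ofNat 2,
      ← ENNReal.ofReal_mul zero_le_two]
    congr 1
    field_simp
  have hexp : p * q * (s - r) / (q - p) * ((q - p) / q) = p * (s - r) := by
    field_simp
  calc _ ≤ _ := setLIntegral_weight_rpow_le_holder hp hpq hr hf _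
    _ = _ := by
      rw [hball, hconst, ENNReal.mul_rpow_of_nonneg _ _ (by positivity),
        ENNReal.ofReal_rpow_of_nonneg (x := R ^ _) (by positivity) (by positivity),
        ← Real.rpow_mul hR, hexp]
      ring

theorem setLIntegral_lt_abs_weight_rpow_le (hp : 0 < p) (hr : 0 < r) {M : ℝ≥0∞}
    (hfM : ∀ ξ, f ξ ≤ M) (hR : 0 < R) :
    ∫⁻ ξ in {ξ | R < |ξ|}, ENNReal.ofReal (|ξ| ^ (-(p * r + 1))) * f ξ ^ p ≤
      M ^ p * ENNReal.ofReal (2 / (p * r)) * ENNReal.ofReal (R ^ (-(p * r))) := by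
  have hpr : 0 < p * r := mul_pos hp hr
  have htail := setLIntegral_lt_abs_abs_rpow (e := -(p * r + 1)) (by linarith) hR
  rw [show -(p * r + 1) + 1 = -(p * r) by ring] at htail
  calc ∫⁻ ξ in {ξ | R < |ξ|}, ENNReal.ofReal (|ξ| ^ (-(p * r + 1))) * f ξ ^ p
      ≤ ∫⁻ ξ in {ξ | R < |ξ|}, ENNReal.ofReal (|ξ| ^ (-(p * r + 1))) * M ^ p := by
        gcongr with ξ
        exact hfM ξ
    _ = M ^ p * (2 * ENNReal.ofReal (-R ^ (-(p * r)) / -(p * r))) := by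
        rw [lintegral_mul_const _ (by fun_prop), htail, mul_comm]
    _ = M ^ p * ENNReal.ofReal (2 / (p * r)) * ENNReal.ofReal (R ^ (-(p * r))) := by
        rw [mul_assoc, ← ENNReal.ofReal_mul (by positivity), ← ENNReal.ofReal_ofNat 2,
          ← ENNReal.ofReal_mul zero_le_two]
        congr 2
        field_simp

theorem lintegral_weight_rpow_le_split (hp : 0 < p) (hpq : p < q) (hr : 0 < r) (hrs : r < s)
    {M : ℝ≥0∞} (hf : Measurable f) (hfM : ∀ ξ, f ξ ≤ M) (hR : 0 < R) :
    ∫⁻ ξ, ENNReal.ofReal (|ξ| ^ (-(p * r + 1))) * f ξ ^ p ≤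
      ENNReal.ofReal (2 * (q - p) / (p * q * (s - r))) ^ ((q - p) / q) *
          (∫⁻ ξ, ENNReal.ofReal (|ξ| ^ (-(q * s + 1))) * f ξ ^ q) ^ (p / q) *
          ENNReal.ofReal (R ^ (p * (s - r))) +
        M ^ p * ENNReal.ofReal (2 / (p * r)) * ENNReal.ofReal (R ^ (-(p * r))) := by
  have hcompl : {ξ : ℝ | |ξ| ≤ R}ᶜ = {ξ | R < |ξ|} := by
    ext ξ
    simp
  have hS : MeasurableSet {ξ : ℝ | |ξ| ≤ R} := measurableSet_le (by fun_prop) (by fun_prop)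
  rw [← lintegral_add_compl _ hS, hcompl]
  exact add_le_add (setLIntegral_abs_le_weight_rpow_le hp hpq hr.le hrs hf hR.le)
    (setLIntegral_lt_abs_weight_rpow_le hp hr hfM hR)

theorem exists_lintegral_weight_rpow_le (hp : 0 < p) (hpq : p < q) (hr : 0 < r) (hrs : r < s)
    {M : ℝ≥0∞} (hM : M ≠ ⊤) :
    ∃ C : ℝ≥0∞, C ≠ ⊤ ∧ ∀ f : ℝ → ℝ≥0∞, Measurable f → (∀ ξ, f ξ ≤ M) →
      ∫⁻ ξ, ENNReal.ofReal (|ξ| ^ (-(p * r + 1))) * f ξ ^ p ≤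
        C * (∫⁻ ξ, ENNReal.ofReal (|ξ| ^ (-(q * s + 1))) * f ξ ^ q) ^ (p * r / (q * s)) := by
  have hq : 0 < q := hp.trans hpq
  have hs : 0 < s := hr.trans hrs
  set K := ENNReal.ofReal (2 * (q - p) / (p * q * (s - r))) ^ ((q - p) / q)
  have hK : K ≠ 0 := by
    have := sub_pos.mpr hpq
    have := sub_pos.mpr hrs
    exact (ENNReal.rpow_pos (ENNReal.ofReal_pos.mpr (by positivity)) ENNReal.ofReal_ne_top).ne'
  refine ⟨K + M ^ p * ENNReal.ofReal (2 / (p * r)), by finiteness, fun f hf hfM => ?_⟩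
  set A := ∫⁻ ξ, ENNReal.ofReal (|ξ| ^ (-(q * s + 1))) * f ξ ^ q
  rcases eq_or_ne A 0 with hA0 | hA0
  · -- Hölder's inequality degenerates: the first factor of the splitting vanishes a.e.
    refine le_of_eq_of_le ?_ zero_le
    rw [lintegral_congr (ofReal_abs_rpow_mul_rpow_eq_mul (s := s) hp hq hr.le)]
    refine ENNReal.lintegral_mul_eq_zero_of_lintegral_rpow_eq_zero (p := q / p) (by positivity)
      (by fun_prop) ?_
    simpa only [ENNReal.rpow_div_rpow_div_cancel hp.ne' hq.ne'] using hA0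
  rcases eq_or_ne A ⊤ with hAtop | hAtop
  · rw [hAtop, ENNReal.top_rpow_of_pos (by positivity), ENNReal.mul_top (by simp [hK])]
    exact le_top
  have hA : 0 < A.toReal := ENNReal.toReal_pos hA0 hAtop
  have hRpow : ∀ t, ENNReal.ofReal ((A.toReal ^ (-(1 / (q * s)))) ^ t) = A ^ (-(t / (q * s))) :=
    fun t => by
      rw [← Real.rpow_mul hA.le, ← ENNReal.ofReal_rpow_of_pos hA, ENNReal.ofReal_toReal hAtop]
      ring_nf
  refine (lintegral_weight_rpow_le_split hp hpq hr hrs hf hfM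
    (Real.rpow_pos_of_pos hA (-(1 / (q * s))))).trans_eq ?_
  rw [hRpow, hRpow, mul_assoc K, ← ENNReal.rpow_add _ _ hA0 hAtop,
    show p / q + -(p * (s - r) / (q * s)) = p * r / (q * s) by field_simp; ring,
    show -(-(p * r) / (q * s)) = p * r / (q * s) by ring]
  ring
end

theorem norm_charFn_le_one (μ : Measure ℝ) [IsProbabilityMeasure μ] (ξ : ℝ) :
    ‖charFn μ ξ‖ ≤ 1 :=
  (norm_integral_le_integral_norm _).trans_eq (by simp [Complex.norm_exp])

theorem continuous_charFn (μ : Measure ℝ) [IsFiniteMeasure μ] : Continuous (charFn μ) :=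
  continuous_of_dominated (bound := fun _ => 1) (fun _ => by fun_prop)
    (fun _ => by simp [Complex.norm_exp]) (integrable_const 1) (by filter_upwards; fun_prop)

theorem ofReal_norm_charFn_sub_le_two (φ ψ : Measure ℝ) [IsProbabilityMeasure φ]
    [IsProbabilityMeasure ψ] (ξ : ℝ) : ENNReal.ofReal ‖charFn φ ξ - charFn ψ ξ‖ ≤ 2 := by
  rw [← ENNReal.ofReal_ofNat 2]
  apply ENNReal.ofReal_le_ofReal
  linarith [norm_sub_le (charFn φ ξ) (charFn ψ ξ), norm_charFn_le_one φ ξ, norm_charFn_le_one ψ ξ]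

theorem stmt_2 (p q r s : ℝ) (hp : 1 ≤ p) (hpq : p < q) (hr : 0 < r) (hrs : r < s) :
    ∃ c : ℝ≥0∞, c ≠ ⊤ ∧
      ∀ (φ ψ : Measure ℝ), IsProbabilityMeasure φ → IsProbabilityMeasure ψ →
        DFourierP r p φ ψ ≤ c * DFourierP s q φ ψ ^ (r / s) := by
  have hp0 : 0 < p := by linarith
  obtain ⟨C, hC, hbound⟩ :=
    exists_lintegral_weight_rpow_le hp0 hpq hr hrs (M := 2) ENNReal.ofNat_ne_top
  refine ⟨C ^ (1 / p), by finiteness, fun φ ψ _ _ => ?_⟩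
  have hf : Measurable fun ξ => ENNReal.ofReal ‖charFn φ ξ - charFn ψ ξ‖ :=
    ((continuous_charFn φ).sub (continuous_charFn ψ)).norm.measurable.ennreal_ofReal
  calc DFourierP r p φ ψ
      ≤ (C * (∫⁻ ξ, ENNReal.ofReal (|ξ| ^ (-(q * s + 1))) *
          ENNReal.ofReal ‖charFn φ ξ - charFn ψ ξ‖ ^ q) ^ (p * r / (q * s))) ^ (1 / p) :=
        ENNReal.rpow_le_rpow (hbound _ hf (ofReal_norm_charFn_sub_le_two φ ψ)) (by positivity)
    _ = C ^ (1 / p) * DFourierP s q φ ψ ^ (r / s) := by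
        rw [DFourierP, ENNReal.mul_rpow_of_nonneg _ _ (by positivity), ← ENNReal.rpow_mul,
          ← ENNReal.rpow_mul]
        congr 2
        field_simp
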